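/- For real matrices of size 2^L × 2^L, define the SpAMM approximate product with tolerance τ > 0 recursively: SpAMM(A,B,τ) = 0 if ‖A‖_F ‖B‖_F < τ; at the lowest level (L = 0, i.e. 1×1 matrices) SpAMM(A,B,τ) = A·B; otherwise, splitting A and B into 2×2 block form with 2^{L−1} × 2^{L−1} blocks, the (i,j) block of SpAMM(A,B,τ) is SpAMM(Aᵢ₀, B₀ⱼ, τ) + SpAMM(Aᵢ₁, B₁ⱼ, τ). Define the error estimate CSE(A,B,τ) recursively: CSE(A,B,τ) = 0 if ‖A‖_F ‖B‖_F = 0; at the lowest level CSE(A,B,τ) = ‖A‖_F ‖B‖_F if ‖A‖_F ‖B‖_F < τ and 0 otherwise; otherwise CSE(A,B,τ) = ( Σ_{i,j ∈ {0,1}} ( CSE(Aᵢ₀, B₀ⱼ, τ) + CSE(Aᵢ₁, B₁ⱼ, τ) )² )^{1/2}. Then for all such A, B and τ > 0, the true error of the approximate product is bounded by the computed estimate: ‖SpAMM(A,B,τ) − A·B‖_F ≤ CSE(A,B,τ). -/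

import Mathlib

open Matrix

/-- Index type for quadtree matrices: `QIdx L` indexes a `2^L × 2^L` matrix.
At the lowest level (`L = 0`) the matrix is `1×1`; a matrix at level `L+1` is
composed of four quadrants at level `L`. -/
def QIdx : ℕ → Type
  | 0 => Unit
  | L + 1 => QIdx L ⊕ QIdx L

instance QIdx.fintype : (L : ℕ) → Fintype (QIdx L)
  | 0 => inferInstanceAs (Fintype Unit)
  | L + 1 => letI := QIdx.fintype L; inferInstanceAs (Fintype (QIdx L ⊕ QIdx L))

/-- The Frobenius norm of a real matrix: `‖M‖_F = (Σ_{i,j} M_{ij}²)^{1/2}`. -/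
noncomputable def frobNorm {m n : Type*} [Fintype m] [Fintype n]
    (M : Matrix m n ℝ) : ℝ :=
  Real.sqrt (∑ i, ∑ j, (M i j) ^ 2)

/-- The SpAMM approximate product with tolerance `τ`: return `0` if
`‖A‖_F ‖B‖_F < τ`; at the lowest level return `A·B`; otherwise assemble the
`(i,j)` block as `SpAMM(Aᵢ₀,B₀ⱼ,τ) + SpAMM(Aᵢ₁,B₁ⱼ,τ)` (blocks in the paper's
quadrant enumeration `X = [[X₀₀, X₁₀],[X₀₁, X₁₁]]`). -/
noncomputable def spamm :
    (L : ℕ) → Matrix (QIdx L) (QIdx L) ℝ → Matrix (QIdx L) (QIdx L) ℝ → ℝ →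
      Matrix (QIdx L) (QIdx L) ℝ
  | 0, A, B, τ => if frobNorm A * frobNorm B < τ then 0 else A * B
  | L + 1, A, B, τ =>
      if frobNorm A * frobNorm B < τ then 0
      else
        Matrix.fromBlocks
          (spamm L A.toBlocks₁₁ B.toBlocks₁₁ τ + spamm L A.toBlocks₁₂ B.toBlocks₂₁ τ)
          (spamm L A.toBlocks₁₁ B.toBlocks₁₂ τ + spamm L A.toBlocks₁₂ B.toBlocks₂₂ τ)
          (spamm L A.toBlocks₂₁ B.toBlocks₁₁ τ + spamm L A.toBlocks₂₂ B.toBlocks₂₁ τ)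
          (spamm L A.toBlocks₂₁ B.toBlocks₁₂ τ + spamm L A.toBlocks₂₂ B.toBlocks₂₂ τ)

/-- The CSE error estimate: `0` if `‖A‖_F ‖B‖_F = 0`; at the lowest level,
`‖A‖_F ‖B‖_F` if `‖A‖_F ‖B‖_F < τ` and `0` otherwise; otherwise the square root
of the sum over the four blocks of the squared accumulated blockwise estimates. -/
noncomputable def cse :
    (L : ℕ) → Matrix (QIdx L) (QIdx L) ℝ → Matrix (QIdx L) (QIdx L) ℝ → ℝ → ℝ
  | 0, A, B, τ =>
      if frobNorm A * frobNorm B = 0 then 0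
      else if frobNorm A * frobNorm B < τ then frobNorm A * frobNorm B else 0
  | L + 1, A, B, τ =>
      if frobNorm A * frobNorm B = 0 then 0
      else
        Real.sqrt
          ((cse L A.toBlocks₁₁ B.toBlocks₁₁ τ + cse L A.toBlocks₁₂ B.toBlocks₂₁ τ) ^ 2
          + (cse L A.toBlocks₁₁ B.toBlocks₁₂ τ + cse L A.toBlocks₁₂ B.toBlocks₂₂ τ) ^ 2
          + (cse L A.toBlocks₂₁ B.toBlocks₁₁ τ + cse L A.toBlocks₂₂ B.toBlocks₂₁ τ) ^ 2
          + (cse L A.toBlocks₂₁ B.toBlocks₁₂ τ + cse L A.toBlocks₂₂ B.toBlocks₂₂ τ) ^ 2)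


/-! Both `SpAMM(A,B,τ) - A·B` and the CSE estimate are assembled quadrant by quadrant from the
eight block products `Aᵢₖ Bₖⱼ`, and the squared Frobenius norm of a block matrix is the sum of the
squared norms of its blocks; so the bound follows by induction on `L` from the triangle inequality
in each quadrant. The blockwise formulas hold even where the recursions stop early: a block has
Frobenius norm at most that of the matrix, so when `‖A‖_F ‖B‖_F < τ` every block product is below
the tolerance too, and when `‖A‖_F ‖B‖_F = 0` every block product has norm zero. -/

attribute [local instance] Matrix.frobeniusSeminormedAddCommGroup

namespace Matrix

variable {l m n o α : Type*}

theorem fromBlocks_sub [Sub α] (A A' : Matrix n l α) (B B' : Matrix n m α)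
    (C C' : Matrix o l α) (D D' : Matrix o m α) :
    fromBlocks A B C D - fromBlocks A' B' C' D' = fromBlocks (A - A') (B - B') (C - C') (D - D') :=
  by ext (i | i) (j | j) <;> rfl

theorem mul_eq_fromBlocks_toBlocks [Fintype l] [Fintype m] [NonUnitalNonAssocSemiring α]
    (A : Matrix (n ⊕ o) (l ⊕ m) α) (B : Matrix (l ⊕ m) (n ⊕ o) α) :
    A * B = fromBlocks
      (A.toBlocks₁₁ * B.toBlocks₁₁ + A.toBlocks₁₂ * B.toBlocks₂₁)
      (A.toBlocks₁₁ * B.toBlocks₁₂ + A.toBlocks₁₂ * B.toBlocks₂₂)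
      (A.toBlocks₂₁ * B.toBlocks₁₁ + A.toBlocks₂₂ * B.toBlocks₂₁)
      (A.toBlocks₂₁ * B.toBlocks₁₂ + A.toBlocks₂₂ * B.toBlocks₂₂) := by
  conv_lhs => rw [← fromBlocks_toBlocks A, ← fromBlocks_toBlocks B]
  exact fromBlocks_multiply ..

end Matrix

section Frobenius

variable {l m n o : Type*} [Fintype l] [Fintype m] [Fintype n] [Fintype o]

theorem frobNorm_eq_norm (M : Matrix m n ℝ) : frobNorm M = ‖M‖ := by
  rw [frobenius_norm_def, frobNorm, Real.sqrt_eq_rpow]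
  norm_num [Real.norm_eq_abs, sq_abs]

theorem frobNorm_nonneg (M : Matrix m n ℝ) : 0 ≤ frobNorm M :=
  Real.sqrt_nonneg _

theorem frobNorm_add_le (M N : Matrix m n ℝ) : frobNorm (M + N) ≤ frobNorm M + frobNorm N := by
  simpa only [frobNorm_eq_norm] using norm_add_le M N

theorem frobNorm_mul_le (A : Matrix l m ℝ) (B : Matrix m n ℝ) :
    frobNorm (A * B) ≤ frobNorm A * frobNorm B := by
  simpa only [frobNorm_eq_norm] using frobenius_norm_mul A B

theorem frobNorm_sq (M : Matrix m n ℝ) : frobNorm M ^ 2 = ∑ i, ∑ j, M i j ^ 2 :=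
  Real.sq_sqrt (by positivity)

theorem frobNorm_fromBlocks_sq (A : Matrix l n ℝ) (B : Matrix l o ℝ) (C : Matrix m n ℝ)
    (D : Matrix m o ℝ) :
    frobNorm (fromBlocks A B C D) ^ 2
      = frobNorm A ^ 2 + frobNorm B ^ 2 + frobNorm C ^ 2 + frobNorm D ^ 2 := by
  simp only [frobNorm_sq, Fintype.sum_sum_type, fromBlocks_apply₁₁, fromBlocks_apply₁₂,
    fromBlocks_apply₂₁, fromBlocks_apply₂₂, Finset.sum_add_distrib]
  ring

theorem frobNorm_fromBlocks_le {A : Matrix l n ℝ} {B : Matrix l o ℝ} {C : Matrix m n ℝ}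
    {D : Matrix m o ℝ} {a b c d : ℝ} (hA : frobNorm A ≤ a) (hB : frobNorm B ≤ b)
    (hC : frobNorm C ≤ c) (hD : frobNorm D ≤ d) :
    frobNorm (fromBlocks A B C D) ≤ √(a ^ 2 + b ^ 2 + c ^ 2 + d ^ 2) := by
  rw [← Real.sqrt_sq (frobNorm_nonneg _), frobNorm_fromBlocks_sq]
  gcongr <;> exact frobNorm_nonneg _

theorem frobNorm_toBlocks_sq (M : Matrix (l ⊕ m) (n ⊕ o) ℝ) :
    frobNorm M ^ 2 = frobNorm M.toBlocks₁₁ ^ 2 + frobNorm M.toBlocks₁₂ ^ 2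
      + frobNorm M.toBlocks₂₁ ^ 2 + frobNorm M.toBlocks₂₂ ^ 2 := by
  rw [← frobNorm_fromBlocks_sq, fromBlocks_toBlocks]

theorem frobNorm_toBlocks_le (M : Matrix (l ⊕ m) (n ⊕ o) ℝ) :
    frobNorm M.toBlocks₁₁ ≤ frobNorm M ∧ frobNorm M.toBlocks₁₂ ≤ frobNorm M ∧
      frobNorm M.toBlocks₂₁ ≤ frobNorm M ∧ frobNorm M.toBlocks₂₂ ≤ frobNorm M := by
  refine ⟨?_, ?_, ?_, ?_⟩ <;>
    refine le_of_pow_le_pow_left₀ two_ne_zero (frobNorm_nonneg M) ?_ <;>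
    nlinarith [frobNorm_toBlocks_sq M]

end Frobenius

section SpAMM

variable {L : ℕ} {τ : ℝ}

theorem spamm_eq_zero_of_lt {A B : Matrix (QIdx L) (QIdx L) ℝ}
    (h : frobNorm A * frobNorm B < τ) : spamm L A B τ = 0 := by
  cases L <;> exact if_pos h

theorem cse_eq_zero_of_eq_zero {A B : Matrix (QIdx L) (QIdx L) ℝ}
    (h : frobNorm A * frobNorm B = 0) : cse L A B τ = 0 := by
  cases L <;> exact if_pos h

theorem cse_zero (A B : Matrix (QIdx 0) (QIdx 0) ℝ) :
    cse 0 A B τ = if frobNorm A * frobNorm B < τ then frobNorm A * frobNorm B else 0 := by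
  rw [cse]
  split_ifs with h <;> simp [h]

theorem spamm_succ (A B : Matrix (QIdx (L + 1)) (QIdx (L + 1)) ℝ) :
    spamm (L + 1) A B τ = fromBlocks
      (spamm L A.toBlocks₁₁ B.toBlocks₁₁ τ + spamm L A.toBlocks₁₂ B.toBlocks₂₁ τ)
      (spamm L A.toBlocks₁₁ B.toBlocks₁₂ τ + spamm L A.toBlocks₁₂ B.toBlocks₂₂ τ)
      (spamm L A.toBlocks₂₁ B.toBlocks₁₁ τ + spamm L A.toBlocks₂₂ B.toBlocks₂₁ τ)
      (spamm L A.toBlocks₂₁ B.toBlocks₁₂ τ + spamm L A.toBlocks₂₂ B.toBlocks₂₂ τ) := by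
  by_cases h : frobNorm A * frobNorm B < τ
  · obtain ⟨hA₁₁, hA₁₂, hA₂₁, hA₂₂⟩ := frobNorm_toBlocks_le A
    obtain ⟨hB₁₁, hB₁₂, hB₂₁, hB₂₂⟩ := frobNorm_toBlocks_le B
    have block_eq_zero {X Y : Matrix (QIdx L) (QIdx L) ℝ} (hX : frobNorm X ≤ frobNorm A)
        (hY : frobNorm Y ≤ frobNorm B) : spamm L X Y τ = 0 :=
      spamm_eq_zero_of_lt ((mul_le_mul hX hY (frobNorm_nonneg _) (frobNorm_nonneg _)).trans_lt h)
    rw [block_eq_zero hA₁₁ hB₁₁, block_eq_zero hA₁₂ hB₂₁, block_eq_zero hA₁₁ hB₁₂,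
      block_eq_zero hA₁₂ hB₂₂, block_eq_zero hA₂₁ hB₁₁, block_eq_zero hA₂₂ hB₂₁,
      block_eq_zero hA₂₁ hB₁₂, block_eq_zero hA₂₂ hB₂₂, add_zero, fromBlocks_zero]
    exact if_pos h
  · exact if_neg h

theorem cse_succ (A B : Matrix (QIdx (L + 1)) (QIdx (L + 1)) ℝ) :
    cse (L + 1) A B τ = √(
      (cse L A.toBlocks₁₁ B.toBlocks₁₁ τ + cse L A.toBlocks₁₂ B.toBlocks₂₁ τ) ^ 2
      + (cse L A.toBlocks₁₁ B.toBlocks₁₂ τ + cse L A.toBlocks₁₂ B.toBlocks₂₂ τ) ^ 2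
      + (cse L A.toBlocks₂₁ B.toBlocks₁₁ τ + cse L A.toBlocks₂₂ B.toBlocks₂₁ τ) ^ 2
      + (cse L A.toBlocks₂₁ B.toBlocks₁₂ τ + cse L A.toBlocks₂₂ B.toBlocks₂₂ τ) ^ 2) := by
  by_cases h : frobNorm A * frobNorm B = 0
  · obtain ⟨hA₁₁, hA₁₂, hA₂₁, hA₂₂⟩ := frobNorm_toBlocks_le A
    obtain ⟨hB₁₁, hB₁₂, hB₂₁, hB₂₂⟩ := frobNorm_toBlocks_le B
    have block_eq_zero {X Y : Matrix (QIdx L) (QIdx L) ℝ} (hX : frobNorm X ≤ frobNorm A)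
        (hY : frobNorm Y ≤ frobNorm B) : cse L X Y τ = 0 :=
      cse_eq_zero_of_eq_zero (le_antisymm
        (h ▸ mul_le_mul hX hY (frobNorm_nonneg _) (frobNorm_nonneg _))
        (mul_nonneg (frobNorm_nonneg _) (frobNorm_nonneg _)))
    rw [block_eq_zero hA₁₁ hB₁₁, block_eq_zero hA₁₂ hB₂₁, block_eq_zero hA₁₁ hB₁₂,
      block_eq_zero hA₁₂ hB₂₂, block_eq_zero hA₂₁ hB₁₁, block_eq_zero hA₂₂ hB₂₁,
      block_eq_zero hA₂₁ hB₁₂, block_eq_zero hA₂₂ hB₂₂]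
    exact (if_pos h).trans (by norm_num)
  · exact if_neg h

end SpAMM

theorem spamm_error_le_cse_general (L : ℕ) (A B : Matrix (QIdx L) (QIdx L) ℝ)
    (τ : ℝ) :
    frobNorm (spamm L A B τ - A * B) ≤ cse L A B τ := by
  induction L with
  | zero =>
    rw [spamm, cse_zero]
    split_ifs
    · simpa only [zero_sub, frobNorm_eq_norm, norm_neg] using frobNorm_mul_le A B
    · simp only [sub_self, frobNorm_eq_norm, norm_zero, le_refl]
  | succ L ih =>
    have block_error_le (X₁ X₂ Y₁ Y₂ : Matrix (QIdx L) (QIdx L) ℝ) :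
        frobNorm (spamm L X₁ Y₁ τ + spamm L X₂ Y₂ τ - (X₁ * Y₁ + X₂ * Y₂))
          ≤ cse L X₁ Y₁ τ + cse L X₂ Y₂ τ := by
      rw [add_sub_add_comm]
      exact (frobNorm_add_le _ _).trans (add_le_add (ih X₁ Y₁) (ih X₂ Y₂))
    -- `QIdx (L + 1)` is only definitionally a sum type, so `rw` cannot use block identities
    -- stated for sum types: `hAB` restates one at `QIdx (L + 1)`, `fromBlocks_sub` is unified.
    have hAB : A * B = _ := mul_eq_fromBlocks_toBlocks A B
    rw [hAB, spamm_succ, cse_succ]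
    exact (congrArg frobNorm (fromBlocks_sub ..)).trans_le <| frobNorm_fromBlocks_le
      (block_error_le ..) (block_error_le ..) (block_error_le ..) (block_error_le ..)

/-- For all `2^L × 2^L` real matrices `A`, `B` and every tolerance
`τ > 0`, the true error of the SpAMM approximate product is bounded by the computed
CSE estimate: `‖SpAMM(A,B,τ) − A·B‖_F ≤ CSE(A,B,τ)`. -/
theorem spamm_error_le_cse (L : ℕ) (A B : Matrix (QIdx L) (QIdx L) ℝ)
    (τ : ℝ) (hτ : 0 < τ) :
    frobNorm (spamm L A B τ - A * B) ≤ cse L A B τ :=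
  spamm_error_le_cse_general L A B τ
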